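/- arXiv:1609.05611 — 5 statements merged into one kernel-verified Lean document; each statement's English description precedes it below -/
import Mathlib

section
/- Let T and T′ be trees, each with at least two vertices, in each of which no two essential vertices are adjacent, and suppose there is a bijection φ from the set of essential vertices of T to the set of essential vertices of T′ satisfying deg_{T′}(φ(v)) = deg_T(v) for all essential v. Then for every natural number i not exceeding the number of essential vertices of T, the maximum over i-element sets S of essential vertices of T of the number of connected components of T − S equals the corresponding maximum for T′. (This is the invariance of Δ_G^i under degree-sequence-preserving changes of the tree, which underlies Corollary B of the paper.) -/
/-!
A finite forest has `|V| - |E|` components, since deleting an edge (always a bridge) adds exactly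
one component. If `S` is an independent set of a tree `T`, then `T - S` is a forest with
`|V| - |S|` vertices and `|V| - 1 - ∑_{v ∈ S} deg v` edges, so it has
`∑_{v ∈ S} deg v - |S| + 1` components. Essential vertices are pairwise non-adjacent, so this
count depends only on the degrees in `S`, and the degree-preserving bijection matches the
`i`-sets of essential vertices of `T` and `T'` with equal degree sums.
-/

open Finset

theorem Finset.sup_powersetCard_filter_sum_eq_of_equiv {α β M γ : Type*}
    [Fintype α] [Fintype β] [DecidableEq α] [DecidableEq β] [AddCommMonoid M]
    [SemilatticeSup γ] [OrderBot γ]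
    {p : α → Prop} {q : β → Prop} [DecidablePred p] [DecidablePred q]
    (e : {a // p a} ≃ {b // q b}) {f : α → M} {g : β → M} (hfg : ∀ a, g (e a) = f a)
    (F : M → γ) (i : ℕ) :
    ((univ.filter p).powersetCard i).sup (fun S => F (∑ a ∈ S, f a))
      = ((univ.filter q).powersetCard i).sup (fun S => F (∑ b ∈ S, g b)) := by
  rw [← univ_map_subtype, ← univ_map_subtype, ← map_univ_equiv e, powersetCard_map,
    powersetCard_map, powersetCard_map, sup_map, sup_map, sup_map]
  refine sup_congr rfl fun A _ => ?_
  simp only [Function.comp_apply, RelEmbedding.coe_toEmbedding, mapEmbedding_apply, sum_map,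
    Function.Embedding.coe_subtype, Equiv.coe_toEmbedding, hfg]

namespace SimpleGraph

variable {V : Type*} {G : SimpleGraph V}

theorem Reachable.deleteEdges_of_not_reachable {x y u v : V} (h : G.Reachable x y)
    (hx : ¬(G.deleteEdges {s(u, v)}).Reachable x v)
    (hy : ¬(G.deleteEdges {s(u, v)}).Reachable y v) :
    (G.deleteEdges {s(u, v)}).Reachable x y := by
  obtain ⟨p, hp⟩ := h.exists_isPath
  exact reachable_deleteEdges_iff_exists_walk.mpr
    ⟨p, hp.isTrail.not_mem_edges_of_not_reachable hx hy⟩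

theorem IsBridge.card_connectedComponent_deleteEdges [Finite V] {u v : V}
    (huv : G.Adj u v) (hbr : G.IsBridge s(u, v)) :
    Nat.card (G.deleteEdges {s(u, v)}).ConnectedComponent = Nat.card G.ConnectedComponent + 1 := by
  classical
  set G' := G.deleteEdges {s(u, v)}
  have hnreach : ¬G'.Reachable u v := isBridge_iff.mp hbr
  let m := ConnectedComponent.map (Hom.ofLE (G.deleteEdges_le {s(u, v)}))
  have hm (x : V) : m (G'.connectedComponentMk x) = G.connectedComponentMk x := rfl
  -- the component of `v` is the new one; the others are exactly the components of `G`
  let F (c : G'.ConnectedComponent) : Option G.ConnectedComponent :=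
    if c = G'.connectedComponentMk v then none else some (m c)
  have hF : F.Bijective := by
    constructor
    · intro c₁ c₂ h
      induction c₁ using ConnectedComponent.ind with | h x => ?_
      induction c₂ using ConnectedComponent.ind with | h y => ?_
      by_cases hx : G'.connectedComponentMk x = G'.connectedComponentMk v <;>
        by_cases hy : G'.connectedComponentMk y = G'.connectedComponentMk v <;>
        simp [F, hx, hy] at h
      · rw [hx, hy]
      · simp only [hm, ConnectedComponent.eq] at h hx hy
        exact ConnectedComponent.sound (h.deleteEdges_of_not_reachable hx hy)
    · rintro (_ | c)
      · exact ⟨G'.connectedComponentMk v, by simp [F]⟩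
      induction c using ConnectedComponent.ind with | h x => ?_
      by_cases hx : G'.connectedComponentMk x = G'.connectedComponentMk v
      · have hu : G'.connectedComponentMk u ≠ G'.connectedComponentMk v :=
          mt ConnectedComponent.exact hnreach
        refine ⟨G'.connectedComponentMk u, ?_⟩
        simp only [F, hu, if_false, hm, Option.some.injEq, ConnectedComponent.eq]
        exact huv.reachable.trans ((ConnectedComponent.exact hx).mono (G.deleteEdges_le _)).symm
      · exact ⟨G'.connectedComponentMk x, by simp only [F, hx, if_false, hm]⟩
  rw [Nat.card_eq_of_bijective F hF, Finite.card_option]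

theorem card_connectedComponent_bot [Finite V] :
    Nat.card (⊥ : SimpleGraph V).ConnectedComponent = Nat.card V :=
  (Nat.card_eq_of_bijective _ ⟨fun _ _ h => reachable_bot.mp (ConnectedComponent.exact h),
    Quot.mk_surjective⟩).symm

theorem IsAcyclic.card_connectedComponent_add_card_edgeSet [Finite V] (hG : G.IsAcyclic) :
    Nat.card G.ConnectedComponent + Nat.card G.edgeSet = Nat.card V := by
  induction G using WellFoundedLT.induction with | _ G ih => ?_
  rcases G.edgeSet.eq_empty_or_nonempty with h | ⟨e, he⟩
  · rw [edgeSet_eq_empty.mp h, card_connectedComponent_bot, edgeSet_bot, Nat.card_coe_set_eq,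
      Set.ncard_empty, add_zero]
  induction e using Sym2.ind with | _ u v => ?_
  have hlt : G.deleteEdges {s(u, v)} < G := by
    rw [← edgeSet_ssubset_edgeSet, edgeSet_deleteEdges]
    exact Set.sdiff_singleton_ssubset.mpr he
  have hcc : Nat.card (G.deleteEdges {s(u, v)}).ConnectedComponent
      = Nat.card G.ConnectedComponent + 1 :=
    (isAcyclic_iff_forall_isBridge.mp hG he).card_connectedComponent_deleteEdges he
  have hedges : Nat.card (G.deleteEdges {s(u, v)}).edgeSet + 1 = Nat.card G.edgeSet := by
    rw [edgeSet_deleteEdges, Nat.card_coe_set_eq, Nat.card_coe_set_eq,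
      Set.ncard_sdiff_singleton_add_one he]
  have := ih _ hlt (hG.anti (G.deleteEdges_le _))
  omega

theorem card_edgeFinset_induce_compl_add_sum_degree [Fintype V] [DecidableEq V]
    [DecidableRel G.Adj] {S : Finset V} (hS : G.IsIndepSet S) :
    #(G.induce (↑S)ᶜ).edgeFinset + ∑ v ∈ S, G.degree v = #G.edgeFinset := by
  have hinduce : #(G.induce (↑S)ᶜ).edgeFinset
      = #(G.edgeFinset.filter (· ∈ ((↑S)ᶜ : Set V).toFinset.sym2)) := by
    rw [← card_map, map_edgeFinset_induce, filter_mem_eq_inter]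
  have hincident : G.edgeFinset.filter (· ∉ ((↑S)ᶜ : Set V).toFinset.sym2)
      = S.biUnion (G.incidenceFinset ·) := by
    ext e
    induction e using Sym2.ind with | _ a b => ?_
    simp only [mem_filter, mem_edgeFinset, mem_edgeSet, mem_sym2_iff, Sym2.mem_iff, mem_biUnion,
      mem_incidenceFinset, incidenceSet, Set.mem_ofPred_eq, Set.mem_toFinset, Set.mem_compl_iff,
      mem_coe]
    grind
  have hdisj : (S : Set V).PairwiseDisjoint (G.incidenceFinset ·) := by
    intro a ha b hb hab
    refine Finset.disjoint_left.mpr fun e hea heb => ?_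
    rw [mem_incidenceFinset] at hea heb
    obtain rfl : e = s(a, b) := (Sym2.mem_and_mem_iff hab).mp ⟨hea.2, heb.2⟩
    exact hS ha hb hab hea.1
  rw [hinduce, ← card_filter_add_card_filter_not (· ∈ ((↑S)ᶜ : Set V).toFinset.sym2)
    (s := G.edgeFinset), hincident, card_biUnion hdisj]
  simp only [card_incidenceFinset_eq_degree]

theorem IsTree.card_connectedComponent_induce_compl_add_card [Fintype V] [DecidableEq V]
    [DecidableRel G.Adj] (hG : G.IsTree) {S : Finset V} (hS : G.IsIndepSet S) :
    Nat.card (G.induce (↑S)ᶜ).ConnectedComponent + #S = ∑ v ∈ S, G.degree v + 1 := by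
  have hforest := (hG.isAcyclic.induce (↑S)ᶜ).card_connectedComponent_add_card_edgeSet
  have hedges := card_edgeFinset_induce_compl_add_sum_degree hS
  have htree := hG.card_edgeFinset
  have hverts : Nat.card ((↑S)ᶜ : Set V) + #S = Fintype.card V := by
    rw [Nat.card_coe_set_eq, ← coe_compl, Set.ncard_coe_finset, card_compl,
      Nat.sub_add_cancel (card_le_univ S)]
  rw [Nat.card_eq_fintype_card (α := (induce _ G).edgeSet), ← edgeFinset_card] at hforest
  omega

theorem IsTree.card_connectedComponent_induce_compl_of_mem_powersetCard [Fintype V]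
    [DecidableEq V] [DecidableRel G.Adj] (hG : G.IsTree) {p : V → Prop} [DecidablePred p]
    (hp : ∀ u v, p u → p v → ¬G.Adj u v) {i : ℕ} {S : Finset V}
    (hS : S ∈ (univ.filter p).powersetCard i) :
    Nat.card (G.induce (↑S)ᶜ).ConnectedComponent = ∑ v ∈ S, G.degree v + 1 - i := by
  obtain ⟨hSp, rfl⟩ := mem_powersetCard.mp hS
  have hpS : ∀ v ∈ S, p v := fun v hv => (mem_filter.mp (hSp hv)).2
  have := hG.card_connectedComponent_induce_compl_add_card
    fun u hu v hv _ => hp u v (hpS u hu) (hpS v hv)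
  omega

end SimpleGraph

open SimpleGraph

theorem stmt_3_general {V V' : Type*} [Fintype V] [Fintype V'] [DecidableEq V] [DecidableEq V']
    (T : SimpleGraph V) (T' : SimpleGraph V')
    [DecidableRel T.Adj] [DecidableRel T'.Adj]
    (hTconn : T.Connected) (hTacyc : T.IsAcyclic)
    (hT'conn : T'.Connected) (hT'acyc : T'.IsAcyclic)
    (hTadj : ∀ u v : V, 3 ≤ T.degree u → 3 ≤ T.degree v → ¬ T.Adj u v)
    (hT'adj : ∀ u v : V', 3 ≤ T'.degree u → 3 ≤ T'.degree v → ¬ T'.Adj u v)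
    (φ : {v : V // 3 ≤ T.degree v} → {w : V' // 3 ≤ T'.degree w})
    (hφ : Function.Bijective φ)
    (hdeg : ∀ v : {v : V // 3 ≤ T.degree v}, T'.degree (φ v).1 = T.degree v.1)
    (i : ℕ) :
    ((Finset.univ.filter (fun v : V => 3 ≤ T.degree v)).powersetCard i).sup
        (fun S => Nat.card (T.induce ((↑S : Set V)ᶜ)).ConnectedComponent)
      = ((Finset.univ.filter (fun w : V' => 3 ≤ T'.degree w)).powersetCard i).sup
        (fun S => Nat.card (T'.induce ((↑S : Set V')ᶜ)).ConnectedComponent) := by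
  have hT : T.IsTree := ⟨hTconn, hTacyc⟩
  have hT' : T'.IsTree := ⟨hT'conn, hT'acyc⟩
  rw [sup_congr rfl fun _ ↦ hT.card_connectedComponent_induce_compl_of_mem_powersetCard hTadj,
    sup_congr rfl fun _ ↦ hT'.card_connectedComponent_induce_compl_of_mem_powersetCard hT'adj]
  exact sup_powersetCard_filter_sum_eq_of_equiv (Equiv.ofBijective φ hφ) hdeg (· + 1 - i) i

/-- If `T` and `T'` are trees (each with at least two vertices, and in each no
two essential vertices are adjacent) with a degree-preserving bijection between their sets of
essential vertices, then for every `i` not exceeding the number of essential vertices of `T`,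
the maximum over `i`-element sets `S` of essential vertices of the number of connected
components of `T − S` equals the corresponding maximum for `T'`. -/
theorem stmt_3 {V V' : Type*} [Fintype V] [Fintype V'] [DecidableEq V] [DecidableEq V']
    (T : SimpleGraph V) (T' : SimpleGraph V')
    [DecidableRel T.Adj] [DecidableRel T'.Adj]
    (hTconn : T.Connected) (hTacyc : T.IsAcyclic) (hTcard : 2 ≤ Fintype.card V)
    (hT'conn : T'.Connected) (hT'acyc : T'.IsAcyclic) (hT'card : 2 ≤ Fintype.card V')
    (hTadj : ∀ u v : V, 3 ≤ T.degree u → 3 ≤ T.degree v → ¬ T.Adj u v)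
    (hT'adj : ∀ u v : V', 3 ≤ T'.degree u → 3 ≤ T'.degree v → ¬ T'.Adj u v)
    (φ : {v : V // 3 ≤ T.degree v} → {w : V' // 3 ≤ T'.degree w})
    (hφ : Function.Bijective φ)
    (hdeg : ∀ v : {v : V // 3 ≤ T.degree v}, T'.degree (φ v).1 = T.degree v.1)
    (i : ℕ) (hi : i ≤ Fintype.card {v : V // 3 ≤ T.degree v}) :
    ((Finset.univ.filter (fun v : V => 3 ≤ T.degree v)).powersetCard i).sup
        (fun S => Nat.card (T.induce ((↑S : Set V)ᶜ)).ConnectedComponent)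
      = ((Finset.univ.filter (fun w : V' => 3 ≤ T'.degree w)).powersetCard i).sup
        (fun S => Nat.card (T'.induce ((↑S : Set V')ᶜ)).ConnectedComponent) :=
  stmt_3_general T T' hTconn hTacyc hT'conn hT'acyc hTadj hT'adj φ hφ hdeg i
end

section
/- With μ, i, the blocks B_1, …, B_i, the block sizes l_j, and the counting function c_n as in the context, the identity (∑_{n ≥ 0} c_n t^n) · (1 − t)^μ = ∏_{j=1}^{i} (1 − (1 − t)^{l_j}) holds in the ring of formal power series with integer coefficients. (This is the combinatorial content of Proposition 3.11 of the paper, computing the Hilbert series of the summand N^{(v̄,l̄)} of the Morse complex of a tree, up to the grading shift t^i.) -/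
/-!
Inclusion–exclusion over the set `T` of blocks on which `a` is required to vanish expresses `c_n`
as an alternating sum of the numbers of compositions of `n` supported on the complement of
`⋃_{j ∈ T} B_j`. On a support of size `m` these have generating function `(1 - t)⁻ᵐ`, so after
multiplying by `(1 - t)^μ` the `T`-term becomes `(-1)^|T| (1 - t)^|⋃_{j ∈ T} B_j|`. For disjoint
blocks this is `∏_{j ∈ T} (-(1 - t)^{l_j})`, and the sum over `T` is the expansion of the product.
-/

open PowerSeries Finset

namespace Finset

theorem card_filter_forall_not_eq_sum_powerset {ι β : Type*} [DecidableEq ι] (s : Finset ι)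
    (A : Finset β) (P : ι → β → Prop) [∀ j, DecidablePred (P j)] :
    (#{a ∈ A | ∀ j ∈ s, ¬ P j a} : ℤ) =
      ∑ t ∈ s.powerset, (-1 : ℤ) ^ #t * #{a ∈ A | ∀ j ∈ t, P j a} := by
  have hsubsets (a : β) :
      s.powerset.filter (fun t => ∀ j ∈ t, P j a) = {j ∈ s | P j a}.powerset := by
    ext t
    simp only [mem_filter, mem_powerset, subset_iff]
    grind
  calc (#{a ∈ A | ∀ j ∈ s, ¬ P j a} : ℤ)
      = ∑ a ∈ A, ∑ t ∈ {j ∈ s | P j a}.powerset, (-1 : ℤ) ^ #t := by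
        rw [card_filter]
        push_cast
        refine sum_congr rfl fun a _ => ?_
        rw [sum_powerset_neg_one_pow_card]
        exact if_congr filter_eq_empty_iff.symm rfl rfl
    _ = ∑ t ∈ s.powerset, ∑ a ∈ A, if ∀ j ∈ t, P j a then (-1 : ℤ) ^ #t else 0 := by
        rw [sum_comm]
        refine sum_congr rfl fun a _ => ?_
        rw [← sum_filter, hsubsets]
    _ = ∑ t ∈ s.powerset, (-1 : ℤ) ^ #t * #{a ∈ A | ∀ j ∈ t, P j a} := by
        refine sum_congr rfl fun t _ => ?_
        rw [← sum_filter, sum_const, nsmul_eq_mul, mul_comm]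

variable {α : Type*} [DecidableEq α]

theorem filter_piAntidiag_forall_eq_zero (s U : Finset α) (n : ℕ) :
    {a ∈ s.piAntidiag n | ∀ k ∈ U, a k = 0} = (s \ U).piAntidiag n := by
  ext a
  simp only [mem_filter, mem_piAntidiag, mem_sdiff]
  constructor
  · rintro ⟨⟨rfl, hsupp⟩, hU⟩
    exact ⟨sum_subset sdiff_subset fun k _ hk => by grind, fun k hk => ⟨hsupp k hk, mt (hU k) hk⟩⟩
  · rintro ⟨rfl, hsupp⟩
    exact ⟨⟨(sum_subset sdiff_subset fun k _ hk => by grind).symm, fun k hk => (hsupp k hk).1⟩,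
      fun k hkU => by grind⟩

theorem card_piAntidiag_cons {i : α} {s : Finset α} (hi : i ∉ s) (n : ℕ) :
    #((cons i s hi).piAntidiag n) = ∑ p ∈ antidiagonal n, #(s.piAntidiag p.2) := by
  rw [piAntidiag_cons, card_disjiUnion]
  simp only [card_map]

end Finset

theorem natCard_sum_eq_and_eq_card_filter_piAntidiag {α : Type*} [Fintype α] [DecidableEq α]
    (n : ℕ) (P : (α → ℕ) → Prop) [DecidablePred P] :
    Nat.card {a : α → ℕ // ∑ k, a k = n ∧ P a} = #{a ∈ univ.piAntidiag n | P a} := by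
  rw [← Nat.card_eq_finsetCard]
  exact Nat.card_congr (Equiv.subtypeEquivRight fun a => by simp)

namespace PowerSeries

variable {α : Type*} [DecidableEq α]

theorem mk_card_piAntidiag_mul_one_sub_pow (R : Type*) [CommRing R] (s : Finset α) :
    mk (fun n => (#(s.piAntidiag n) : R)) * (1 - X) ^ #s = 1 := by
  induction s using Finset.cons_induction with
  | empty =>
    ext n
    rcases n with _ | n <;> simp [piAntidiag_empty]
  | cons i s hi ih =>
    have hcons : mk (fun n => (#((cons i s hi).piAntidiag n) : R)) =
        mk 1 * mk (fun n => (#(s.piAntidiag n) : R)) := by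
      ext n
      simp only [coeff_mk, card_piAntidiag_cons, coeff_mul, Nat.cast_sum, Pi.one_apply, one_mul]
    rw [hcons, card_cons, pow_succ', mul_mul_mul_comm, ih, mk_one_mul_one_sub_eq_one, mul_one]

variable [Fintype α] {ι : Type*} [Fintype ι] [DecidableEq ι]

theorem mk_natCard_forall_exists_pos_eq_sum_powerset (B : ι → Finset α) :
    mk (fun n => (Nat.card {a : α → ℕ // ∑ k, a k = n ∧ ∀ j, ∃ k ∈ B j, 0 < a k} : ℤ)) =
      ∑ t ∈ univ.powerset, C ((-1) ^ #t) * mk (fun n => (#((t.biUnion B)ᶜ.piAntidiag n) : ℤ)) := by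
  ext n
  rw [coeff_mk, natCard_sum_eq_and_eq_card_filter_piAntidiag, map_sum]
  -- `convert` rather than `rw`: the filters carry differently synthesized `Decidable` instances.
  convert card_filter_forall_not_eq_sum_powerset univ (univ.piAntidiag n)
    (fun j (a : α → ℕ) => ∀ k ∈ B j, a k = 0) using 3 with t
  · ext a
    simp [pos_iff_ne_zero]
  · rw [coeff_C_mul, coeff_mk, compl_eq_univ_sdiff, ← filter_piAntidiag_forall_eq_zero]
    congr 3
    ext a
    simp only [mem_filter, mem_biUnion, forall_exists_index, and_imp]
    exact and_congr_right fun _ =>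
      ⟨fun h j hj k hk => h k j hj hk, fun h k j hj hk => h j hj k hk⟩

theorem mk_natCard_forall_exists_pos_mul_one_sub_pow (B : ι → Finset α) :
    mk (fun n => (Nat.card {a : α → ℕ // ∑ k, a k = n ∧ ∀ j, ∃ k ∈ B j, 0 < a k} : ℤ)) *
        (1 - X) ^ Fintype.card α =
      ∑ t ∈ univ.powerset, (-1) ^ #t * (1 - X) ^ #(t.biUnion B) := by
  rw [mk_natCard_forall_exists_pos_eq_sum_powerset, sum_mul]
  refine sum_congr rfl fun t _ => ?_
  rw [← card_compl_add_card (t.biUnion B), pow_add, mul_assoc, ← mul_assoc (mk _),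
    mk_card_piAntidiag_mul_one_sub_pow, one_mul, map_pow, map_neg, map_one]

end PowerSeries

theorem stmt_4_general (μ : ℕ) (i : ℕ) (B : Fin i → Finset (Fin μ))
    (hdisj : ∀ j j', j ≠ j' → Disjoint (B j) (B j'))
    (c : ℕ → ℕ)
    (hc : ∀ n, c n =
      Nat.card {a : Fin μ → ℕ // (∑ k, a k) = n ∧ ∀ j, ∃ k ∈ B j, 0 < a k}) :
    (PowerSeries.mk fun n => (c n : ℤ)) * (1 - PowerSeries.X) ^ μ
      = ∏ j, (1 - (1 - PowerSeries.X) ^ (B j).card) := by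
  have hgf := PowerSeries.mk_natCard_forall_exists_pos_mul_one_sub_pow B
  rw [Fintype.card_fin] at hgf
  simp_rw [hc, hgf, prod_sub]
  refine sum_congr rfl fun t _ => ?_
  rw [prod_const_one, mul_one, prod_pow_eq_pow_sum,
    card_biUnion fun j _ j' _ h => hdisj j j' h]

/-- With pairwise disjoint nonempty blocks `B_1, …, B_i ⊆ Fin μ` of sizes `l_j`,
and `c n` counting functions `a : Fin μ → ℕ` with `∑ a = n` hitting every block positively,
one has `(∑ c_n t^n) · (1 − t)^μ = ∏_j (1 − (1 − t)^{l_j})` in `ℤ⟦t⟧`. -/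
theorem stmt_4 (μ : ℕ) (hμ : 1 ≤ μ) (i : ℕ) (B : Fin i → Finset (Fin μ))
    (hB : ∀ j, (B j).Nonempty)
    (hdisj : ∀ j j', j ≠ j' → Disjoint (B j) (B j'))
    (c : ℕ → ℕ)
    (hc : ∀ n, c n =
      Nat.card {a : Fin μ → ℕ // (∑ k, a k) = n ∧ ∀ j, ∃ k ∈ B j, 0 < a k}) :
    (PowerSeries.mk fun n => (c n : ℤ)) * (1 - PowerSeries.X) ^ μ
      = ∏ j, (1 - (1 - PowerSeries.X) ^ (B j).card) :=
  stmt_4_general μ i B hdisj c hc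
end

section
/- With μ, i, the blocks B_1, …, B_i, the block sizes l_j, and the counting function c_n as in the context, for every natural number n one has, as an identity of integers, c_n = ∑_{r=0}^{n} (−1)^{r+i} A_r · C(n − r + μ − 1, μ − 1), where A_r = ∑ ∏_{j=1}^{i} C(l_j, d_j), the inner sum being over all tuples (d_1, …, d_i) of positive integers with d_1 + ⋯ + d_i = r. (This is the closed-form coefficient extraction that yields the explicit Betti-number polynomial of Theorem 3.14 of the paper.) -/
open Finset Function PowerSeries

/-! By inclusion–exclusion over the set `S` of blocks that `a` misses,
`c_n = ∑_S (-1)^|S| #{a | ∑ a = n, a = 0 on ⋃_{j ∈ S} B_j}`, and by stars and bars the inner count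
is the coefficient of `x^n` in `(1 - x)^(∑_{j ∈ S} l_j) / (1 - x)^μ`. Summing over `S` shows that
`∑ c_n x^n = ∏_j (1 - (1 - x)^(l_j)) / (1 - x)^μ`; the coefficient of `x^r` in the numerator is
`(-1)^(r + i) A_r`, and that of `x^m` in `1 / (1 - x)^μ` is `C(m + μ - 1, μ - 1)`. -/

namespace Finset

lemma card_piAntidiag_nat {ι : Type*} [DecidableEq ι] (s : Finset ι) (n : ℕ) :
    #(piAntidiag s n) = (#s + n - 1).choose n := by
  rw [← card_finsuppAntidiag_nat_eq_choose, finsuppAntidiag, card_map, card_attach]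

lemma filter_piAntidiag_univ_forall_eq_zero {ι : Type*} [Fintype ι] [DecidableEq ι]
    (Z : Finset ι) (n : ℕ) :
    {f ∈ piAntidiag (univ : Finset ι) n | ∀ k ∈ Z, f k = 0} = piAntidiag Zᶜ n := by
  have hsum {f : ι → ℕ} (hZ : ∀ k ∈ Z, f k = 0) : ∑ k ∈ Zᶜ, f k = ∑ k, f k :=
    sum_subset (subset_univ _) fun k _ hk => hZ k (by simpa using hk)
  ext f
  simp only [mem_filter, mem_piAntidiag, mem_univ, implies_true, and_true, mem_compl]
  constructor
  · rintro ⟨rfl, hZ⟩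
    exact ⟨hsum hZ, fun k hk hkZ => hk (hZ k hkZ)⟩
  · rintro ⟨rfl, hZ⟩
    have hZ' : ∀ k ∈ Z, f k = 0 := fun k hkZ => by_contra fun hk => hZ k hk hkZ
    exact ⟨(hsum hZ').symm, hZ'⟩

lemma inclusion_exclusion_card_filter {α κ : Type*} [Fintype κ] [DecidableEq κ] (A : Finset α)
    (p : κ → α → Prop) [∀ j, DecidablePred (p j)] :
    (#{x ∈ A | ∀ j, ¬ p j x} : ℤ) = ∑ S : Finset κ, (-1 : ℤ) ^ #S * #{x ∈ A | ∀ j ∈ S, p j x} := by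
  have hind (x : α) : (if ∀ j, ¬ p j x then 1 else 0 : ℤ)
      = ∑ S : Finset κ, (-1) ^ #S * if ∀ j ∈ S, p j x then 1 else 0 := by
    calc (if ∀ j, ¬ p j x then 1 else 0 : ℤ) = ∏ j, (1 - if p j x then 1 else 0) := by
          rw [← Fintype.prod_boole]; exact prod_congr rfl fun j _ => by split_ifs <;> simp
      _ = _ := by simp [prod_sub, prod_boole]
  simp only [card_filter, Nat.cast_sum, Nat.cast_ite, Nat.cast_one, Nat.cast_zero, hind, mul_sum]
  exact sum_comm

end Finset

namespace PowerSeries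

variable {R : Type*} [CommRing R]

lemma coeff_one_sub_X_pow (L d : ℕ) :
    coeff d ((1 - X : R⟦X⟧) ^ L) = (-1 : R) ^ d * L.choose d := by
  have : (1 - X : R⟦X⟧) ^ L = rescale (-1) (((1 + Polynomial.X) ^ L : Polynomial R) : R⟦X⟧) := by
    simp [sub_eq_add_neg]
  rw [this, coeff_rescale, Polynomial.coeff_coe, Polynomial.coeff_one_add_X_pow]

-- For `d = 0` the truncated subtraction gives `C(n - 1, n)`, which is `1` exactly when `n = 0`.
lemma coeff_invOneSubPow (d n : ℕ) : coeff n (invOneSubPow R d).val = (d + n - 1).choose n := by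
  cases d with
  | zero => cases n <;> simp [invOneSubPow_zero, coeff_one]
  | succ d => simp [invOneSubPow_val_succ_eq_mk_add_choose, Nat.choose_symm_add]

lemma coeff_one_sub_X_pow_mul_invOneSubPow {z d : ℕ} (h : z ≤ d) (n : ℕ) :
    coeff n ((1 - X : R⟦X⟧) ^ z * (invOneSubPow R d).val) = (d - z + n - 1).choose n := by
  obtain ⟨m, rfl⟩ := Nat.exists_eq_add_of_le' h
  rw [one_sub_pow_mul_invOneSubPow_val_add_eq_invOneSubPow_val, coeff_invOneSubPow,
    Nat.add_sub_cancel]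

lemma coeff_mul_invOneSubPow {d : ℕ} (hd : 0 < d) (f : R⟦X⟧) (n : ℕ) :
    coeff n (f * (invOneSubPow R d).val)
      = ∑ r ∈ range (n + 1), coeff r f * (n - r + d - 1).choose (d - 1) := by
  rw [coeff_mul, Nat.sum_antidiagonal_eq_sum_range_succ_mk]
  refine sum_congr rfl fun r _ => ?_
  rw [invOneSubPow_val_eq_mk_sub_one_add_choose_of_pos R d hd, coeff_mk]
  congr 3
  omega

lemma coeff_prod_eq_sum_piAntidiag {ι : Type*} [DecidableEq ι] (s : Finset ι) (f : ι → R⟦X⟧)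
    (n : ℕ) : coeff n (∏ j ∈ s, f j) = ∑ l ∈ piAntidiag s n, ∏ j ∈ s, coeff (l j) (f j) := by
  rw [coeff_prod, finsuppAntidiag, sum_map]
  exact sum_attach (piAntidiag s n) fun l => ∏ j ∈ s, coeff (l j) (f j)

lemma coeff_one_sub_one_sub_X_pow (L d : ℕ) :
    coeff d (1 - (1 - X : R⟦X⟧) ^ L) = if d = 0 then 0 else (-1 : R) ^ (d + 1) * L.choose d := by
  rw [map_sub, coeff_one, coeff_one_sub_X_pow]
  split_ifs with hd
  · simp [hd]
  · ring

lemma coeff_prod_one_sub_one_sub_X_pow {κ : Type*} [Fintype κ] [DecidableEq κ] (L : κ → ℕ)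
    (r : ℕ) :
    coeff r (∏ j, (1 - (1 - X : R⟦X⟧) ^ L j)) = (-1 : R) ^ (r + Fintype.card κ) *
      ∑ d ∈ {d ∈ piAntidiag (univ : Finset κ) r | ∀ j, 0 < d j}, ∏ j, ((L j).choose (d j) : R) := by
  rw [coeff_prod_eq_sum_piAntidiag, sum_filter, mul_sum]
  refine sum_congr rfl fun d hd => ?_
  split_ifs with hpos
  · calc ∏ j, coeff (d j) (1 - (1 - X : R⟦X⟧) ^ L j)
        = ∏ j, ((-1 : R) ^ (d j + 1) * (L j).choose (d j)) :=
          prod_congr rfl fun j _ => by rw [coeff_one_sub_one_sub_X_pow, if_neg (hpos j).ne']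
      _ = _ := by
          rw [prod_mul_distrib, prod_pow_eq_pow_sum, sum_add_distrib, (mem_piAntidiag.1 hd).1,
            sum_const, card_univ, smul_eq_mul, mul_one]
  · obtain ⟨j, hj⟩ := not_forall.1 hpos
    rw [mul_zero]
    apply prod_eq_zero (mem_univ j)
    rw [coeff_one_sub_one_sub_X_pow, if_pos (by omega)]

end PowerSeries

theorem natCard_forall_exists_pos_eq_coeff {ι κ : Type*} [Fintype ι] [DecidableEq ι]
    [Fintype κ] [DecidableEq κ] {B : κ → Finset ι} (hB : Pairwise (Disjoint on B)) (n : ℕ) :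
    (Nat.card {f : ι → ℕ // ∑ k, f k = n ∧ ∀ j, ∃ k ∈ B j, 0 < f k} : ℤ) =
      coeff n ((∏ j, (1 - (1 - X : ℤ⟦X⟧) ^ #(B j))) * (invOneSubPow ℤ (Fintype.card ι)).val) := by
  have hvanish (S : Finset κ) :
      (#{f ∈ piAntidiag (univ : Finset ι) n | ∀ j ∈ S, ∀ k ∈ B j, f k = 0} : ℤ) =
        coeff n ((1 - X : ℤ⟦X⟧) ^ (∑ j ∈ S, #(B j)) * (invOneSubPow ℤ (Fintype.card ι)).val) := by
    rw [← card_biUnion (hB.set_pairwise S), coeff_one_sub_X_pow_mul_invOneSubPow (card_le_univ _),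
      ← card_compl, ← card_piAntidiag_nat, ← filter_piAntidiag_univ_forall_eq_zero]
    congr 2
    refine filter_congr fun f _ => ?_
    simp only [mem_biUnion, forall_exists_index, and_imp]
    exact ⟨fun h k j hj hk => h j hj k hk, fun h j hj k hk => h k j hj hk⟩
  have hcard : Nat.card {f : ι → ℕ // ∑ k, f k = n ∧ ∀ j, ∃ k ∈ B j, 0 < f k} =
      #{f ∈ piAntidiag (univ : Finset ι) n | ∀ j, ¬ ∀ k ∈ B j, f k = 0} := by
    rw [← Nat.card_eq_finsetCard]
    exact Nat.card_congr (Equiv.subtypeEquivRight fun f => by simp [pos_iff_ne_zero])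
  rw [hcard, inclusion_exclusion_card_filter, prod_sub, ← powerset_univ, sum_mul, map_sum]
  refine sum_congr rfl fun S _ => ?_
  rw [hvanish, prod_const_one, mul_one, prod_pow_eq_pow_sum, mul_assoc, show (-1 : ℤ⟦X⟧) ^ #S = C ((-1) ^ #S) by simp, coeff_C_mul]

theorem stmt_6_general (μ : ℕ) (hμ : 1 ≤ μ) (i : ℕ) (B : Fin i → Finset (Fin μ))
    (hdisj : ∀ j j', j ≠ j' → Disjoint (B j) (B j'))
    (c : ℕ → ℕ)
    (hc : ∀ n, c n =
      Nat.card {a : Fin μ → ℕ // (∑ k, a k) = n ∧ ∀ j, ∃ k ∈ B j, 0 < a k})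
    (n : ℕ) :
    (c n : ℤ) = ∑ r ∈ Finset.range (n + 1),
      (-1 : ℤ) ^ (r + i) *
        (∑ d ∈ (Finset.Nat.antidiagonalTuple i r).filter (fun d => ∀ j, 0 < d j),
          ∏ j, (((B j).card).choose (d j) : ℤ)) *
        ((n - r + μ - 1).choose (μ - 1) : ℤ) := by
  rw [hc, natCard_forall_exists_pos_eq_coeff (fun j j' h => hdisj j j' h), Fintype.card_fin,
    coeff_mul_invOneSubPow hμ]
  refine sum_congr rfl fun r _ => ?_
  rw [coeff_prod_one_sub_one_sub_X_pow, Fintype.card_fin, piAntidiag_univ_fin_eq_antidiagonalTuple]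
  -- the two filters differ only in their `Decidable` instances
  congr!

/-- With blocks `B_1, …, B_i ⊆ Fin μ` pairwise disjoint and nonempty, of sizes
`l_j`, and `c n` the number of `a : Fin μ → ℕ` with `∑ a = n` hitting each block positively,
one has for every `n`:
`c n = ∑_{r=0}^{n} (−1)^{r+i} A_r · C(n − r + μ − 1, μ − 1)` in `ℤ`, where
`A_r = ∑_{d_1+⋯+d_i = r, d_j ≥ 1} ∏_j C(l_j, d_j)`. -/
theorem stmt_6 (μ : ℕ) (hμ : 1 ≤ μ) (i : ℕ) (B : Fin i → Finset (Fin μ))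
    (hB : ∀ j, (B j).Nonempty)
    (hdisj : ∀ j j', j ≠ j' → Disjoint (B j) (B j'))
    (c : ℕ → ℕ)
    (hc : ∀ n, c n =
      Nat.card {a : Fin μ → ℕ // (∑ k, a k) = n ∧ ∀ j, ∃ k ∈ B j, 0 < a k})
    (n : ℕ) :
    (c n : ℤ) = ∑ r ∈ Finset.range (n + 1),
      (-1 : ℤ) ^ (r + i) *
        (∑ d ∈ (Finset.Nat.antidiagonalTuple i r).filter (fun d => ∀ j, 0 < d j),
          ∏ j, (((B j).card).choose (d j) : ℤ)) *
        ((n - r + μ - 1).choose (μ - 1) : ℤ) :=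
  stmt_6_general μ hμ i B hdisj c hc n
end

section
/- With μ, i, the blocks B_1, …, B_i, and the ideal I as in the context, for every finitely supported function a : Fin μ → ℕ, the monomial x^a = ∏_k x_k^{a(k)} lies in I if and only if for every j ∈ {1, …, i} there exists k ∈ B_j with a(k) > 0. (This membership criterion is the content of the isomorphism of Proposition 3.10 of the paper, identifying the summand N^{(v̄,l̄)}(i) with a squarefree monomial ideal.) -/
/-- Let `I ⊆ ℚ[x_1,…,x_μ]` be the ideal generated by the squarefree monomials
`x_{k_1} ⋯ x_{k_i}` over all tuples `(k_1,…,k_i) ∈ B_1 × ⋯ × B_i`, where the `B_j ⊆ Fin μ`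
are pairwise disjoint and nonempty. Then for a finitely supported `a : Fin μ →₀ ℕ`, the
monomial `x^a` lies in `I` iff for every `j` there is `k ∈ B_j` with `a k > 0`. -/
theorem stmt_10 (μ : ℕ) (hμ : 1 ≤ μ) (i : ℕ) (B : Fin i → Finset (Fin μ))
    (hB : ∀ j, (B j).Nonempty)
    (hdisj : ∀ j j', j ≠ j' → Disjoint (B j) (B j'))
    (I : Ideal (MvPolynomial (Fin μ) ℚ))
    (hI : I = Ideal.span {p : MvPolynomial (Fin μ) ℚ |
        ∃ k : Fin i → Fin μ, (∀ j, k j ∈ B j) ∧ p = ∏ j, MvPolynomial.X (k j)})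
    (a : Fin μ →₀ ℕ) :
    MvPolynomial.monomial a (1 : ℚ) ∈ I ↔ ∀ j, ∃ k ∈ B j, 0 < a k := by
  have hgen : {p : MvPolynomial (Fin μ) ℚ |
      ∃ k : Fin i → Fin μ, (∀ j, k j ∈ B j) ∧ p = ∏ j, MvPolynomial.X (k j)} =
      (fun s => MvPolynomial.monomial s (1 : ℚ)) ''
      {s : Fin μ →₀ ℕ | ∃ k : Fin i → Fin μ, (∀ j, k j ∈ B j) ∧
        s = ∑ j, Finsupp.single (k j) 1} := by
    ext p
    constructor
    · rintro ⟨k, hk, rfl⟩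
      refine ⟨∑ j, Finsupp.single (k j) 1, ⟨k, hk, rfl⟩, ?_⟩
      show MvPolynomial.monomial (∑ j, Finsupp.single (k j) 1) (1:ℚ) = _
      rw [MvPolynomial.monomial_sum_one]
      rfl
    · rintro ⟨s, ⟨k, hk, rfl⟩, rfl⟩
      refine ⟨k, hk, ?_⟩
      show MvPolynomial.monomial (∑ j, Finsupp.single (k j) 1) (1:ℚ) = _
      rw [MvPolynomial.monomial_sum_one]
      rfl
  rw [hI, hgen, MvPolynomial.mem_ideal_span_monomial_image]
  rw [MvPolynomial.support_monomial, if_neg one_ne_zero]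
  simp only [Finset.mem_singleton, forall_eq, Set.mem_setOf_eq]
  constructor
  · rintro ⟨si, ⟨k, hk, rfl⟩, hle⟩ j
    refine ⟨k j, hk j, ?_⟩
    have h1 : (1 : ℕ) ≤ (∑ j', Finsupp.single (k j') 1) (k j) := by
      rw [Finsupp.finset_sum_apply]
      calc (1 : ℕ) = Finsupp.single (k j) 1 (k j) := by simp
        _ ≤ _ := Finset.single_le_sum (f := fun j' => Finsupp.single (k j') 1 (k j))
            (fun _ _ => Nat.zero_le _) (Finset.mem_univ j)
    exact lt_of_lt_of_le h1 (hle (k j))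
  · intro h
    choose k hk hka using h
    refine ⟨∑ j, Finsupp.single (k j) 1, ⟨k, hk, rfl⟩, ?_⟩
    intro m
    rw [Finsupp.finset_sum_apply]
    by_cases hm : ∃ j, k j = m
    · obtain ⟨j0, hj0⟩ := hm
      have : ∀ j' ∈ Finset.univ, j' ≠ j0 → Finsupp.single (k j') 1 m = 0 := by
        intro j' _ hj'
        have hne : k j' ≠ m := by
          intro hkm
          have h1 : k j' ∈ B j0 := by rw [hkm, ← hj0]; exact hk j0
          exact (Finset.disjoint_left.mp (hdisj j' j0 hj') (hk j') h1)
        simp [Finsupp.single_apply, hne]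
      rw [Finset.sum_eq_single j0 this (by simp)]
      simp only [hj0, Finsupp.single_apply, if_pos rfl]
      exact hj0 ▸ hka j0
    · push_neg at hm
      have : ∀ j ∈ Finset.univ, Finsupp.single (k j) 1 m = 0 := by
        intro j _; simp [Finsupp.single_apply, hm j]
      rw [Finset.sum_eq_zero this]
      exact Nat.zero_le _
end

section
/- With μ, i, the blocks B_1, …, B_i, and the ideal I as in the context, for every natural number n the ℚ-dimension of the degree-n homogeneous component of I (that is, of the intersection of I with the submodule of homogeneous polynomials of total degree n in MvPolynomial (Fin μ) ℚ) equals the number of functions a : Fin μ → ℕ with ∑_k a(k) = n such that for every j ∈ {1, …, i} there exists k ∈ B_j with a(k) > 0. (This computes the Hilbert function of the squarefree monomial ideal of Proposition 3.10 of the paper.) -/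
/-!
A monomial ideal is spanned, as a vector space, by the monomials divisible by one of its
generators, so its degree-`n` component has as a basis the monomials of degree `n` lying in the
upper closure of the generating exponents. For the transversal monomials `x_{k_1} ⋯ x_{k_i}`,
disjointness of the blocks makes every choice `k` injective, so `x^a` is divisible by one of them
exactly when `a` is positive somewhere on every block.
-/

open MvPolynomial

namespace MvPolynomial

variable {σ R : Type*} [CommSemiring R]

theorem restrictScalars_span_monomial_image (S : Set (σ →₀ ℕ)) :
    (Ideal.span ((monomial · (1 : R)) '' S)).restrictScalars R
      = restrictSupport R (upperClosure S : Set (σ →₀ ℕ)) := by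
  ext p
  simp only [Submodule.restrictScalars_mem, mem_ideal_span_monomial_image,
    mem_restrictSupport_iff, Set.subset_def, SetLike.mem_coe, mem_upperClosure]

theorem restrictSupport_inf (s t : Set (σ →₀ ℕ)) :
    restrictSupport R s ⊓ restrictSupport R t = restrictSupport R (s ∩ t) := by
  ext p
  simp only [Submodule.mem_inf, mem_restrictSupport_iff, Set.subset_inter_iff]

theorem finrank_restrictSupport [StrongRankCondition R] (s : Set (σ →₀ ℕ)) :
    Module.finrank R (restrictSupport R s) = Nat.card s :=
  Module.finrank_eq_nat_card_basis (basisRestrictSupport R s)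

theorem finrank_span_monomial_image_inf_homogeneousSubmodule [StrongRankCondition R]
    (S : Set (σ →₀ ℕ)) (n : ℕ) :
    Module.finrank R ↥((Ideal.span ((monomial · (1 : R)) '' S)).restrictScalars R
        ⊓ homogeneousSubmodule σ R n)
      = Nat.card {d : σ →₀ ℕ // d.degree = n ∧ ∃ s ∈ S, s ≤ d} := by
  rw [restrictScalars_span_monomial_image, homogeneousSubmodule_eq_finsupp_supported,
    ← restrictSupport, restrictSupport_inf, finrank_restrictSupport]
  exact Nat.card_congr (Equiv.subtypeEquivRight fun d => by
    simp only [Set.mem_inter_iff, SetLike.mem_coe, mem_upperClosure, Set.mem_ofPred_eq, and_comm])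

theorem prod_X_eq_monomial_sum_single {ι : Type*} (t : Finset ι) (k : ι → σ) :
    ∏ j ∈ t, X (k j) = monomial (∑ j ∈ t, Finsupp.single (k j) 1) (1 : R) := by
  rw [monomial_sum_one]
  rfl

end MvPolynomial

namespace Finsupp

variable {ι σ : Type*} [Fintype ι]

theorem pos_of_sum_single_one_le {k : ι → σ} {d : σ →₀ ℕ} (h : ∑ j, single (k j) 1 ≤ d)
    (j : ι) : 0 < d (k j) :=
  single_le_iff.mp <| (Finset.single_le_sum (fun _ _ => zero_le) (Finset.mem_univ j)).trans h

theorem sum_single_one_le_iff {k : ι → σ} (hk : Function.Injective k) {d : σ →₀ ℕ} :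
    ∑ j, single (k j) 1 ≤ d ↔ ∀ j, 0 < d (k j) := by
  refine ⟨pos_of_sum_single_one_le, fun h m => ?_⟩
  rw [finsetSum_apply]
  by_cases hm : m ∈ Set.range k
  · obtain ⟨j, rfl⟩ := hm
    rw [Finset.sum_eq_single j (fun j' _ hj' => single_eq_of_ne' (hk.ne hj')) (by simp),
      single_eq_same]
    exact h j
  · simp_all

theorem exists_transversal_sum_single_le_iff {B : ι → Finset σ} (hB : Pairwise (Function.onFun Disjoint B))
    (d : σ →₀ ℕ) :
    (∃ k : ι → σ, (∀ j, k j ∈ B j) ∧ ∑ j, single (k j) 1 ≤ d) ↔ ∀ j, ∃ k ∈ B j, 0 < d k := by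
  constructor
  · rintro ⟨k, hkB, hkd⟩ j
    exact ⟨k j, hkB j, pos_of_sum_single_one_le hkd j⟩
  · intro h
    choose k hkB hkd using h
    have hk : Function.Injective k := fun j j' hjj' => hB.eq <|
      Finset.not_disjoint_iff.mpr ⟨k j, hkB j, hjj' ▸ hkB j'⟩
    exact ⟨k, hkB, (sum_single_one_le_iff hk).mpr hkd⟩

end Finsupp

theorem stmt_11_general (μ : ℕ) (i : ℕ) (B : Fin i → Finset (Fin μ))
    (hdisj : ∀ j j', j ≠ j' → Disjoint (B j) (B j'))
    (I : Ideal (MvPolynomial (Fin μ) ℚ))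
    (hI : I = Ideal.span {p : MvPolynomial (Fin μ) ℚ |
        ∃ k : Fin i → Fin μ, (∀ j, k j ∈ B j) ∧ p = ∏ j, MvPolynomial.X (k j)})
    (n : ℕ) :
    Module.finrank ℚ
        ↥(Submodule.restrictScalars ℚ I ⊓ MvPolynomial.homogeneousSubmodule (Fin μ) ℚ n)
      = Nat.card {a : Fin μ → ℕ // (∑ k, a k) = n ∧ ∀ j, ∃ k ∈ B j, 0 < a k} := by
  have hgen : {p : MvPolynomial (Fin μ) ℚ |
      ∃ k : Fin i → Fin μ, (∀ j, k j ∈ B j) ∧ p = ∏ j, MvPolynomial.X (k j)}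
      = (monomial · (1 : ℚ)) '' ((fun k : Fin i → Fin μ => ∑ j, Finsupp.single (k j) 1) ''
          {k | ∀ j, k j ∈ B j}) := by
    ext p
    simp only [Set.image_image, Set.mem_image, Set.mem_ofPred_eq, prod_X_eq_monomial_sum_single,
      eq_comm]
  rw [hI, hgen, finrank_span_monomial_image_inf_homogeneousSubmodule]
  exact Nat.card_congr (Finsupp.equivFunOnFinite.subtypeEquiv fun d => by
    simp only [Set.exists_mem_image, Set.mem_ofPred_eq, Finsupp.degree_eq_sum,
      Finsupp.exists_transversal_sum_single_le_iff hdisj, Finsupp.equivFunOnFinite_apply])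

/-- With `I ⊆ ℚ[x_1,…,x_μ]` the ideal generated by the squarefree monomials
`x_{k_1} ⋯ x_{k_i}` over tuples `(k_1,…,k_i) ∈ B_1 × ⋯ × B_i` (the `B_j ⊆ Fin μ` pairwise
disjoint and nonempty), for each `n` the ℚ-dimension of the degree-`n` homogeneous component
of `I` equals the number of `a : Fin μ → ℕ` with `∑ a = n` hitting each block positively. -/
theorem stmt_11 (μ : ℕ) (hμ : 1 ≤ μ) (i : ℕ) (B : Fin i → Finset (Fin μ))
    (hB : ∀ j, (B j).Nonempty)
    (hdisj : ∀ j j', j ≠ j' → Disjoint (B j) (B j'))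
    (I : Ideal (MvPolynomial (Fin μ) ℚ))
    (hI : I = Ideal.span {p : MvPolynomial (Fin μ) ℚ |
        ∃ k : Fin i → Fin μ, (∀ j, k j ∈ B j) ∧ p = ∏ j, MvPolynomial.X (k j)})
    (n : ℕ) :
    Module.finrank ℚ
        ↥(Submodule.restrictScalars ℚ I ⊓ MvPolynomial.homogeneousSubmodule (Fin μ) ℚ n)
      = Nat.card {a : Fin μ → ℕ // (∑ k, a k) = n ∧ ∀ j, ∃ k ∈ B j, 0 < a k} :=
  stmt_11_general μ i B hdisj I hI n
end
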